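/- arXiv:1209.4109 — 3 statements merged into one kernel-verified Lean document; each statement's English description precedes it below -/
import Mathlib

section
/- Let π be a commutative monoid and let ω ∈ π be an element such that the localization π[ω⁻¹] is a group. Then for any s₁, s₂ ∈ π there exist t₁, t₂ ∈ π with s₁·t₁ = s₂·t₂. -/
/-- If the localization of a commutative monoid `π` at the powers of `ω` is a group,
then any two elements `s₁ s₂` admit `t₁ t₂` with `s₁ * t₁ = s₂ * t₂`. -/
theorem stmt_0 {π : Type*} [CommMonoid π] (ω : π)
    (hgroup : ∀ x : Localization (Submonoid.powers ω), ∃ y, x * y = 1)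
    (s₁ s₂ : π) : ∃ t₁ t₂ : π, s₁ * t₁ = s₂ * t₂ := by
  obtain ⟨y, hy⟩ := hgroup (Localization.mk s₂ 1)
  obtain ⟨⟨a, b⟩, hab⟩ : ∃ p : π × Submonoid.powers ω,
      Localization.mk p.1 p.2 = Localization.mk s₁ 1 * y :=
    Localization.induction_on
      (p := fun x => ∃ p : π × Submonoid.powers ω, Localization.mk p.1 p.2 = x)
      (Localization.mk s₁ 1 * y) fun p => ⟨p, rfl⟩
  have h : Localization.mk (s₂ * a) b = Localization.mk s₁ 1 := by
    rw [show ((b : Submonoid.powers ω)) = 1 * b from (one_mul b).symm,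
      ← Localization.mk_mul s₂ a 1 b, hab, mul_left_comm, hy, mul_one]
  rw [Localization.mk_eq_mk_iff, Localization.r_iff_exists] at h
  obtain ⟨c, hc⟩ := h
  simp only [OneMemClass.coe_one, one_mul] at hc
  refine ⟨(b : π) * c, a * c, ?_⟩
  calc s₁ * ((b : π) * c) = (c : π) * ((b : π) * s₁) := by ac_rfl
    _ = (c : π) * (s₂ * a) := (hc).symm
    _ = s₂ * (a * c) := by ac_rfl
end

section
/- Let R be a ring, π a submonoid of its multiplicative monoid, and ω ∈ π a central element such that every element of π becomes invertible in R[ω⁻¹]. Then for every r ∈ R and s ∈ π there exist r' ∈ R and k ∈ ℕ with r·ωᵏ = s·r'. -/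
/-- `f : R →+* S` presents `S` as the localization `R[ω⁻¹]` of the (possibly
noncommutative) ring `R` at the central multiplicative set of powers of `ω`:
`f ω` is invertible, every element of `S` is a fraction `f r * (f ω)⁻ᵏ`, and the
kernel of `f` consists of the elements killed by a power of `ω`. -/
def IsPowLocalization {R S : Type*} [Ring R] [Ring S] (f : R →+* S) (ω : R) : Prop :=
  IsUnit (f ω) ∧
  (∀ s : S, ∃ (r : R) (k : ℕ), s * f ω ^ k = f r) ∧
  (∀ r : R, f r = 0 ↔ ∃ k : ℕ, r * ω ^ k = 0)

/-- If `π` is a submonoid of a ring `R`, `ω ∈ π` is central, and every element of `π`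
becomes invertible in `R[ω⁻¹]`, then for every `r ∈ R` and `s ∈ π` there exist `r'`
and `k` with `r * ω ^ k = s * r'`. -/
theorem stmt_3 {R S : Type*} [Ring R] [Ring S] (π : Submonoid R) (ω : R) (hω : ω ∈ π)
    (hcentral : ∀ x : R, ω * x = x * ω)
    (f : R →+* S) (hloc : IsPowLocalization f ω)
    (hinv : ∀ s ∈ π, IsUnit (f s))
    (r : R) (s : R) (hs : s ∈ π) :
    ∃ (r' : R) (k : ℕ), r * ω ^ k = s * r' := by
  obtain ⟨hωu, hsurj, hker⟩ := hloc
  obtain ⟨u, hu⟩ := hinv s hs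
  obtain ⟨r₀, k, hr₀⟩ := hsurj ((↑u⁻¹ : S) * f r)
  have key : f (r * ω ^ k - s * r₀) = 0 := by
    have : f s * (((↑u⁻¹ : S) * f r) * f ω ^ k) = f s * f r₀ := by rw [hr₀]
    rw [← mul_assoc, ← mul_assoc, ← hu, Units.mul_inv, one_mul] at this
    rw [map_sub, map_mul, map_pow, this, map_mul, ← hu]
    exact sub_self _
  obtain ⟨m, hm⟩ := (hker _).1 key
  refine ⟨r₀ * ω ^ m, k + m, ?_⟩
  have : r * ω ^ k * ω ^ m - s * r₀ * ω ^ m = 0 := by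
    rw [← sub_mul]; exact hm
  have h2 : r * ω ^ k * ω ^ m = s * (r₀ * ω ^ m) := by
    rw [← mul_assoc]; exact sub_eq_zero.mp this
  rw [pow_add, ← mul_assoc]; exact h2
end

section
/- Let γ : ℝ → ℝⁿ be a smooth curve, periodic with period 1, such that γ'(t), …, γ⁽ⁿ⁾(t) are linearly independent for all t, and let A : [0,1] → GL(n, ℝ) be smooth. Then there exists N₀ such that for all integers N > N₀ the curve t ↦ A(t)·γ(Nt), t ∈ [0,1], is nondegenerate: its first n derivatives are linearly independent at each t. -/
open Finset Set

section Aux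

variable {E F : Type*} [NormedAddCommGroup E] [NormedSpace ℝ E]
  [NormedAddCommGroup F] [NormedSpace ℝ F]

lemma hasDerivAt_iteratedDeriv {f : ℝ → F} (hf : ContDiff ℝ (⊤ : ℕ∞) f) (m : ℕ) (t : ℝ) :
    HasDerivAt (iteratedDeriv m f) (iteratedDeriv (m + 1) f t) t := by
  have h := (hf.differentiable_iteratedDeriv m
    (by exact_mod_cast lt_top_iff_ne_top.2 (by simp))).differentiableAt (x := t)
  simpa [iteratedDeriv_succ] using h.hasDerivAt

lemma leibniz_clm_apply (B : ℝ → (E →L[ℝ] F)) (g : ℝ → E)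
    (hB : ContDiff ℝ (⊤ : ℕ∞) B) (hg : ContDiff ℝ (⊤ : ℕ∞) g) (k : ℕ) :
    iteratedDeriv k (fun t => B t (g t)) = fun t =>
      ∑ j ∈ Finset.range (k + 1), (k.choose j : ℝ) •
        (iteratedDeriv (k - j) B t) (iteratedDeriv j g t) := by
  induction k with
  | zero => simp
  | succ k ih =>
    funext t
    rw [iteratedDeriv_succ, ih]
    have hterm : ∀ j ∈ Finset.range (k + 1), HasDerivAt
        (fun t => (k.choose j : ℝ) • (iteratedDeriv (k - j) B t) (iteratedDeriv j g t))
        ((k.choose j : ℝ) • ((iteratedDeriv (k - j + 1) B t) (iteratedDeriv j g t)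
          + (iteratedDeriv (k - j) B t) (iteratedDeriv (j + 1) g t))) t := by
      intro j _
      exact (((hasDerivAt_iteratedDeriv hB (k - j) t).clm_apply
        (hasDerivAt_iteratedDeriv hg j t))).const_smul _
    have hsum := HasDerivAt.fun_sum hterm
    rw [hsum.deriv]
    have hX : ∀ j, j ∈ Finset.range (k + 1) → k - j + 1 = k + 1 - j := by
      intro j hj; rw [Finset.mem_range] at hj; omega
    calc ∑ j ∈ range (k + 1), (k.choose j : ℝ) •
          ((iteratedDeriv (k - j + 1) B t) (iteratedDeriv j g t)
            + (iteratedDeriv (k - j) B t) (iteratedDeriv (j + 1) g t))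
        = (∑ j ∈ range (k + 1), (k.choose j : ℝ) •
            (iteratedDeriv (k + 1 - j) B t) (iteratedDeriv j g t))
          + ∑ j ∈ range (k + 1), (k.choose j : ℝ) •
            (iteratedDeriv (k - j) B t) (iteratedDeriv (j + 1) g t) := by
          rw [← Finset.sum_add_distrib]
          refine Finset.sum_congr rfl fun j hj => ?_
          rw [smul_add, hX j hj]
      _ = ∑ j ∈ range (k + 1 + 1), ((k + 1).choose j : ℝ) •
            (iteratedDeriv (k + 1 - j) B t) (iteratedDeriv j g t) := by
          rw [Finset.sum_range_succ' (fun j => ((k + 1).choose j : ℝ) •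
            (iteratedDeriv (k + 1 - j) B t) (iteratedDeriv j g t)) (k + 1)]
          simp only [Nat.choose_succ_succ, Nat.succ_sub_succ, Nat.cast_add, Nat.choose_zero_right,
            Nat.cast_one, Nat.sub_zero, one_smul, iteratedDeriv_zero, add_smul]
          rw [Finset.sum_add_distrib]
          have h1 : ∑ j ∈ range (k + 1), (k.choose j : ℝ) •
              (iteratedDeriv (k + 1 - j) B t) (iteratedDeriv j g t)
            = (∑ j ∈ range (k + 1), (k.choose (j + 1) : ℝ) •
              (iteratedDeriv (k - j) B t) (iteratedDeriv (j + 1) g t))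
              + (iteratedDeriv (k + 1) B t) (iteratedDeriv 0 g t) := by
            rw [Finset.sum_range_succ' (fun j => (k.choose j : ℝ) •
              (iteratedDeriv (k + 1 - j) B t) (iteratedDeriv j g t)) k]
            rw [Finset.sum_range_succ (fun j => (k.choose (j + 1) : ℝ) •
              (iteratedDeriv (k - j) B t) (iteratedDeriv (j + 1) g t)) k]
            simp [Nat.succ_sub_succ, Nat.choose_succ_self]
          rw [h1]
          simp only [Nat.succ_eq_add_one, iteratedDeriv_zero]
          abel

lemma periodic_iteratedDeriv (f : ℝ → F) (hf : Function.Periodic f 1) (m : ℕ) :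
    Function.Periodic (iteratedDeriv m f) 1 := by
  induction m with
  | zero => simpa [iteratedDeriv_zero]
  | succ m ih =>
    intro x
    have hfun : (fun y => iteratedDeriv m f (y + 1)) = iteratedDeriv m f := funext ih
    calc iteratedDeriv (m + 1) f (x + 1) = deriv (iteratedDeriv m f) (x + 1) := by
          rw [iteratedDeriv_succ]
      _ = deriv (fun y => iteratedDeriv m f (y + 1)) x := (deriv_comp_add_const (iteratedDeriv m f) 1 x).symm
      _ = iteratedDeriv (m + 1) f x := by rw [hfun, ← iteratedDeriv_succ]

lemma bounded_of_periodic_continuous (f : ℝ → F) (hf : Continuous f)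
    (hp : Function.Periodic f 1) : ∃ C, 0 ≤ C ∧ ∀ s, ‖f s‖ ≤ C := by
  obtain ⟨C, hC⟩ := (isCompact_Icc (a := (0:ℝ)) (b := 1)).exists_bound_of_continuousOn
    hf.continuousOn
  refine ⟨max C 0, le_max_right _ _, fun s => ?_⟩
  have hmem : f s ∈ f '' Icc (0:ℝ) (0 + 1) := by
    rw [hp.image_Icc one_pos 0]; exact mem_range_self s
  obtain ⟨x, hx, hfx⟩ := hmem
  rw [← hfx]
  have hx' : x ∈ Icc (0:ℝ) 1 := by simpa using hx
  exact (hC x hx').trans (le_max_left _ _)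

end Aux

/-- If `γ` is a smooth 1-periodic nondegenerate curve in `ℝⁿ` and `A` a smooth curve of
invertible linear maps, then for all sufficiently large `N` the "telephone wire"
`t ↦ A t (γ (N t))` is nondegenerate on `[0, 1]`. -/
theorem stmt_10 {n : ℕ} (γ : ℝ → EuclideanSpace ℝ (Fin n))
    (A : ℝ → (EuclideanSpace ℝ (Fin n) →L[ℝ] EuclideanSpace ℝ (Fin n)))
    (hγ : ContDiff ℝ (⊤ : ℕ∞) γ) (hper : ∀ t : ℝ, γ (t + 1) = γ t)
    (hnd : ∀ t : ℝ, LinearIndependent ℝ (fun i : Fin n => iteratedDeriv (i + 1) γ t))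
    (hA : ContDiff ℝ (⊤ : ℕ∞) A)
    (hAinv : ∀ t ∈ Set.Icc (0 : ℝ) 1, Function.Bijective (A t)) :
    ∃ N₀ : ℕ, ∀ N : ℕ, N₀ < N → ∀ t ∈ Set.Icc (0 : ℝ) 1,
      LinearIndependent ℝ
        (fun i : Fin n =>
          iteratedDeriv (i + 1) (fun s => A s (γ ((N : ℝ) * s))) t) := by
  classical
  -- coordinates
  set eL : EuclideanSpace ℝ (Fin n) ≃ₗ[ℝ] (Fin n → ℝ) := WithLp.linearEquiv 2 ℝ (Fin n → ℝ)
    with heL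
  have hcoord : ∀ (x : EuclideanSpace ℝ (Fin n)) (j : Fin n), |eL x j| ≤ ‖x‖ := by
    intro x j
    have h1 : ‖x‖ = Real.sqrt (∑ i, ‖eL x i‖ ^ 2) := EuclideanSpace.norm_eq x
    rw [h1]
    have h2 : |eL x j| = Real.sqrt (‖eL x j‖ ^ 2) := by
      rw [Real.sqrt_sq_eq_abs]; simp [abs_abs]
    rw [h2]
    exact Real.sqrt_le_sqrt (Finset.single_le_sum (f := fun i => ‖eL x i‖ ^ 2)
      (fun i _ => sq_nonneg _) (Finset.mem_univ j))
  -- bounds on γ derivatives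
  have hγc : ∀ m : ℕ, Continuous (iteratedDeriv m γ) :=
    fun m => hγ.continuous_iteratedDeriv m (by exact_mod_cast le_top)
  have hγp : ∀ m : ℕ, Function.Periodic (iteratedDeriv m γ) 1 :=
    fun m => periodic_iteratedDeriv γ hper m
  choose Cg hCg0 hCg using fun m : ℕ =>
    bounded_of_periodic_continuous (iteratedDeriv m γ) (hγc m) (hγp m)
  set Cγ : ℝ := ∑ j ∈ range (n + 1), Cg j with hCγdef
  have hCγ : ∀ j ≤ n, ∀ s, ‖iteratedDeriv j γ s‖ ≤ Cγ := by
    intro j hj s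
    exact (hCg j s).trans (Finset.single_le_sum (f := Cg)
      (fun i _ => hCg0 i) (Finset.mem_range.2 (by omega)))
  have hCγ0 : 0 ≤ Cγ := Finset.sum_nonneg fun i _ => hCg0 i
  -- bounds on A derivatives on [0,1]
  choose Ca hCa using fun m : ℕ =>
    (isCompact_Icc (a := (0:ℝ)) (b := 1)).exists_bound_of_continuousOn
      ((hA.continuous_iteratedDeriv m (by exact_mod_cast le_top)).continuousOn)
  set CA : ℝ := ∑ j ∈ range (n + 1), max (Ca j) 0 with hCAdef
  have hCA : ∀ j ≤ n, ∀ t ∈ Icc (0:ℝ) 1, ‖iteratedDeriv j A t‖ ≤ CA := by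
    intro j hj t ht
    refine ((hCa j t ht).trans (le_max_left (Ca j) 0)).trans ?_
    exact Finset.single_le_sum (f := fun j => max (Ca j) 0)
      (fun i _ => le_max_right _ _) (Finset.mem_range.2 (by omega))
  have hCA0 : 0 ≤ CA := Finset.sum_nonneg fun i _ => le_max_right _ _
  set C : ℝ := 2 ^ n * CA * Cγ with hCdef
  have hC0 : 0 ≤ C := by positivity
  -- the key quantitative bound
  have key : ∀ N : ℕ, 1 ≤ N → ∀ t ∈ Icc (0:ℝ) 1, ∀ k : ℕ, 1 ≤ k → k ≤ n →
      ‖(((N:ℝ) ^ k)⁻¹ • iteratedDeriv k (fun s => A s (γ ((N:ℝ) * s))) t)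
        - (A t) (iteratedDeriv k γ ((N:ℝ) * t))‖ ≤ C / N := by
    intro N hN t ht k hk1 hkn
    have hNpos : (0:ℝ) < N := by exact_mod_cast hN
    have hN1 : (1:ℝ) ≤ N := by exact_mod_cast hN
    have hgc : ContDiff ℝ (⊤ : ℕ∞) (fun s => γ ((N:ℝ) * s)) :=
      hγ.comp (contDiff_const.mul contDiff_id)
    have hform := congrFun (leibniz_clm_apply A (fun s => γ ((N:ℝ) * s)) hA hgc k) t
    have hgj : ∀ j : ℕ, iteratedDeriv j (fun s => γ ((N:ℝ) * s)) t
        = (N:ℝ) ^ j • iteratedDeriv j γ ((N:ℝ) * t) := by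
      intro j
      exact congrFun (iteratedDeriv_comp_const_smul (hγ.of_le (by exact_mod_cast le_top)) ((N:ℝ))) t
    rw [hform]
    have hsum : ∑ j ∈ range (k + 1), (k.choose j : ℝ) •
          (iteratedDeriv (k - j) A t) (iteratedDeriv j (fun s => γ ((N:ℝ) * s)) t)
        = ∑ j ∈ range (k + 1), ((k.choose j : ℝ) * (N:ℝ) ^ j) •
          (iteratedDeriv (k - j) A t) (iteratedDeriv j γ ((N:ℝ) * t)) := by
      refine Finset.sum_congr rfl fun j _ => ?_
      rw [hgj j, map_smul, smul_smul]
    rw [hsum, Finset.smul_sum, Finset.sum_range_succ]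
    have hlast : (((N:ℝ) ^ k)⁻¹ • (((k.choose k : ℝ) * (N:ℝ) ^ k) •
        (iteratedDeriv (k - k) A t) (iteratedDeriv k γ ((N:ℝ) * t))))
        = (A t) (iteratedDeriv k γ ((N:ℝ) * t)) := by
      rw [Nat.choose_self, Nat.sub_self, iteratedDeriv_zero]
      rw [smul_smul]
      rw [inv_mul_eq_div]
      rw [Nat.cast_one, one_mul, div_self (by positivity), one_smul]
    rw [hlast, add_sub_cancel_right]
    calc ‖∑ j ∈ range k, ((N:ℝ) ^ k)⁻¹ • ((k.choose j : ℝ) * (N:ℝ) ^ j) •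
            (iteratedDeriv (k - j) A t) (iteratedDeriv j γ ((N:ℝ) * t))‖
        ≤ ∑ j ∈ range k, ‖((N:ℝ) ^ k)⁻¹ • ((k.choose j : ℝ) * (N:ℝ) ^ j) •
            (iteratedDeriv (k - j) A t) (iteratedDeriv j γ ((N:ℝ) * t))‖ :=
          norm_sum_le _ _
      _ ≤ ∑ j ∈ range k, (k.choose j : ℝ) * (CA * Cγ) / N := by
          refine Finset.sum_le_sum fun j hj => ?_
          rw [Finset.mem_range] at hj
          rw [norm_smul, norm_smul]
          have hA' : ‖(iteratedDeriv (k - j) A t) (iteratedDeriv j γ ((N:ℝ) * t))‖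
              ≤ CA * Cγ := by
            refine ((iteratedDeriv (k - j) A t).le_opNorm _).trans ?_
            exact mul_le_mul (hCA _ (by omega) t ht) (hCγ _ (by omega) _)
              (norm_nonneg _) hCA0
          have hpow : (N:ℝ) ^ j * ((N:ℝ) ^ k)⁻¹ ≤ ((N:ℝ))⁻¹ := by
            rw [mul_inv_le_iff₀ (by positivity), inv_mul_eq_div, le_div_iff₀ hNpos]
            calc (N:ℝ) ^ j * N = (N:ℝ) ^ (j + 1) := by ring
              _ ≤ (N:ℝ) ^ k := pow_le_pow_right₀ hN1 (by omega)
          have hcoef : ‖((N:ℝ) ^ k)⁻¹‖ * ‖((k.choose j : ℝ) * (N:ℝ) ^ j)‖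
              ≤ (k.choose j : ℝ) / N := by
            have h1 : ‖((N:ℝ) ^ k)⁻¹‖ = ((N:ℝ) ^ k)⁻¹ := by
              rw [norm_inv, norm_pow, Real.norm_eq_abs, abs_of_pos hNpos]
            have h2 : ‖((k.choose j : ℝ) * (N:ℝ) ^ j)‖ = (k.choose j : ℝ) * (N:ℝ) ^ j := by
              rw [norm_mul, norm_pow, Real.norm_natCast, Real.norm_eq_abs, abs_of_pos hNpos]
            rw [h1, h2, div_eq_mul_inv]
            calc ((N:ℝ) ^ k)⁻¹ * ((k.choose j : ℝ) * (N:ℝ) ^ j)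
                = (k.choose j : ℝ) * ((N:ℝ) ^ j * ((N:ℝ) ^ k)⁻¹) := by ring
              _ ≤ (k.choose j : ℝ) * ((N:ℝ))⁻¹ :=
                  mul_le_mul_of_nonneg_left hpow (Nat.cast_nonneg _)
          calc ‖((N:ℝ) ^ k)⁻¹‖ * (‖((k.choose j : ℝ) * (N:ℝ) ^ j)‖ *
                ‖(iteratedDeriv (k - j) A t) (iteratedDeriv j γ ((N:ℝ) * t))‖)
              ≤ ((k.choose j : ℝ) / N) * (CA * Cγ) := by
                rw [← mul_assoc]
                exact mul_le_mul hcoef hA' (norm_nonneg _) (by positivity)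
            _ = (k.choose j : ℝ) * (CA * Cγ) / N := by ring
      _ ≤ C / N := by
          rw [← Finset.sum_div, ← Finset.sum_mul]
          gcongr
          have h2k : ∑ j ∈ range k, (k.choose j : ℝ) ≤ 2 ^ n := by
            have : ∑ j ∈ range k, (k.choose j : ℝ)
                ≤ ∑ j ∈ range (k + 1), (k.choose j : ℝ) := by
              refine Finset.sum_le_sum_of_subset_of_nonneg
                (Finset.range_subset_range.2 (by omega)) (fun i _ _ => Nat.cast_nonneg _)
            refine this.trans ?_
            have hc : ∑ j ∈ range (k + 1), (k.choose j : ℝ) = 2 ^ k := by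
              exact_mod_cast congrArg (Nat.cast (R := ℝ)) (Nat.sum_range_choose k)
            rw [hc]
            exact pow_le_pow_right₀ one_le_two hkn
          calc (∑ j ∈ range k, (k.choose j : ℝ)) * (CA * Cγ)
              ≤ 2 ^ n * (CA * Cγ) := mul_le_mul_of_nonneg_right h2k (by positivity)
            _ = C := by rw [hCdef]; ring
  -- the matrix family
  set G : ℝ × ℝ → Fin n → Fin n → ℝ :=
    fun p i j => eL (A p.1 (iteratedDeriv ((i : ℕ) + 1) γ p.2)) j with hGdef
  have hGcont : Continuous G := by
    refine continuous_pi fun i => continuous_pi fun j => ?_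
    have h1 : Continuous fun p : ℝ × ℝ => A p.1 (iteratedDeriv ((i : ℕ) + 1) γ p.2) :=
      (hA.continuous.comp continuous_fst).clm_apply
        ((hγc _).comp continuous_snd)
    exact (continuous_apply j).comp ((PiLp.continuous_ofLp 2 (fun _ : Fin n => ℝ)).comp h1)
  -- determinant
  set dd : (Fin n → Fin n → ℝ) → ℝ := fun u => (Matrix.of u).det with hdddef
  have hddcont : Continuous dd :=
    Continuous.matrix_det (A := fun u : Fin n → Fin n → ℝ => Matrix.of u)
      (by exact continuous_id)
  -- K and positivity of |det| on K
  set K : Set (ℝ × ℝ) := Icc (0:ℝ) 1 ×ˢ Icc (0:ℝ) 1 with hKdef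
  have hKcomp : IsCompact K := isCompact_Icc.prod isCompact_Icc
  have hKne : K.Nonempty := ⟨(0, 0), by constructor <;> exact ⟨le_refl 0, zero_le_one⟩⟩
  have hrowsLI : ∀ p : ℝ × ℝ, p.1 ∈ Icc (0:ℝ) 1 →
      LinearIndependent ℝ (fun i : Fin n => G p i) := by
    intro p hp1
    have h2 := (hnd p.2).map'
      (eL.toLinearMap ∘ₗ (A p.1 : EuclideanSpace ℝ (Fin n) →ₗ[ℝ] EuclideanSpace ℝ (Fin n)))
      (LinearMap.ker_eq_bot.2 (eL.injective.comp (hAinv p.1 hp1).1))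
    have hfun : (fun i : Fin n => G p i)
        = ⇑(eL.toLinearMap ∘ₗ (A p.1 : EuclideanSpace ℝ (Fin n) →ₗ[ℝ] EuclideanSpace ℝ (Fin n)))
          ∘ fun i : Fin n => iteratedDeriv ((i : ℕ) + 1) γ p.2 := by
      funext i
      simp only [hGdef]
      rfl
    rw [hfun]
    exact h2
  have hne : ∀ p : ℝ × ℝ, p.1 ∈ Icc (0:ℝ) 1 → dd (G p) ≠ 0 := by
    intro p hp1
    have hu : IsUnit (Matrix.of (G p)) :=
      Matrix.linearIndependent_rows_iff_isUnit.mp (hrowsLI p hp1)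
    have := (Matrix.isUnit_iff_isUnit_det _).mp hu
    exact (isUnit_iff_ne_zero.mp this)
  -- min of |det| on K
  obtain ⟨p₀, hp₀K, hmin⟩ := hKcomp.exists_isMinOn hKne
    ((hddcont.comp hGcont).abs.continuousOn)
  set ε : ℝ := |dd (G p₀)| with hεdef
  have hε : 0 < ε := abs_pos.2 (hne p₀ hp₀K.1)
  -- uniform continuity of det near the image of K
  set K' : Set (Fin n → Fin n → ℝ) := G '' K with hK'def
  have hK'comp : IsCompact K' := hKcomp.image hGcont
  set L : Set (Fin n → Fin n → ℝ) := Metric.cthickening 1 K' with hLdef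
  have hLcomp : IsCompact L := hK'comp.cthickening
  have hUC := hLcomp.uniformContinuousOn_of_continuous hddcont.continuousOn
  rw [Metric.uniformContinuousOn_iff] at hUC
  obtain ⟨δ, hδpos, hδ⟩ := hUC ε hε
  set δ' : ℝ := min δ 1 with hδ'def
  have hδ'pos : 0 < δ' := lt_min hδpos one_pos
  -- choose N₀
  refine ⟨max 1 ⌈C / δ'⌉₊, fun N hN t ht => ?_⟩
  have hN1 : 1 ≤ N := le_of_lt (lt_of_le_of_lt (le_max_left _ _) hN)
  have hNpos : (0:ℝ) < N := by exact_mod_cast hN1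
  have hCN : C / N < δ' := by
    have h1 : C / δ' < N := by
      have h2 : (⌈C / δ'⌉₊ : ℝ) < N := by
        exact_mod_cast lt_of_le_of_lt (le_max_right 1 ⌈C / δ'⌉₊) hN
      exact lt_of_le_of_lt (Nat.le_ceil _) h2
    rw [div_lt_iff₀ hNpos]
    rw [div_lt_iff₀ hδ'pos] at h1
    linarith [h1]
  -- the scaled derivative rows
  set w : Fin n → EuclideanSpace ℝ (Fin n) := fun i =>
    (((N:ℝ) ^ ((i : ℕ) + 1))⁻¹) •
      iteratedDeriv ((i : ℕ) + 1) (fun s => A s (γ ((N:ℝ) * s))) t with hwdef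
  set X : Fin n → Fin n → ℝ := fun i j => eL (w i) j with hXdef
  set p : ℝ × ℝ := (t, Int.fract ((N:ℝ) * t)) with hpdef
  have hpK : p ∈ K := by
    refine ⟨ht, ⟨Int.fract_nonneg _, le_of_lt (Int.fract_lt_one _)⟩⟩
  have hGfract : ∀ (i : Fin n), iteratedDeriv ((i : ℕ) + 1) γ (Int.fract ((N:ℝ) * t))
      = iteratedDeriv ((i : ℕ) + 1) γ ((N:ℝ) * t) := by
    intro i
    have h := (hγp ((i : ℕ) + 1)).sub_int_mul_eq (x := (N:ℝ) * t) ⌊(N:ℝ) * t⌋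
    rw [mul_one, Int.self_sub_floor] at h
    exact h
  have hdist : dist X (G p) ≤ C / N := by
    rw [dist_pi_le_iff (by positivity)]
    intro i
    rw [dist_pi_le_iff (by positivity)]
    intro j
    rw [Real.dist_eq]
    have hG1 : G p i j = eL (A t (iteratedDeriv ((i : ℕ) + 1) γ ((N:ℝ) * t))) j := by
      rw [hGdef, hpdef]
      show eL (A t (iteratedDeriv ((i : ℕ) + 1) γ (Int.fract ((N:ℝ) * t)))) j = _
      rw [hGfract i]
    have hX1 : X i j = eL (w i) j := by rw [hXdef]
    have hXG : X i j - G p i j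
        = eL (w i - A t (iteratedDeriv ((i : ℕ) + 1) γ ((N:ℝ) * t))) j := by
      rw [hX1, hG1, map_sub]
      rfl
    rw [hXG]
    refine (hcoord _ j).trans ?_
    exact key N hN1 t ht ((i : ℕ) + 1) (by omega) (by omega)
  have hXL : X ∈ L := by
    refine Metric.mem_cthickening_of_dist_le X (G p) 1 K' ⟨p, hpK, rfl⟩ ?_
    exact hdist.trans (le_trans (le_of_lt hCN) (min_le_right δ 1))
  have hGpL : G p ∈ L := Metric.self_subset_cthickening K' ⟨p, hpK, rfl⟩
  have hddX : dd X ≠ 0 := by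
    intro h0
    have hdd := hδ X hXL (G p) hGpL (lt_of_le_of_lt hdist (lt_of_lt_of_le hCN (min_le_left δ 1)))
    rw [Real.dist_eq, h0, zero_sub, abs_neg] at hdd
    exact absurd hdd (not_lt.2 (hmin hpK))
  -- conclude linear independence
  have hXrows : LinearIndependent ℝ (fun i : Fin n => X i) := by
    have hu : IsUnit (Matrix.of X) := (Matrix.isUnit_iff_isUnit_det _).mpr
      (isUnit_iff_ne_zero.mpr hddX)
    exact Matrix.linearIndependent_rows_iff_isUnit.mpr hu
  have hwLI : LinearIndependent ℝ w := by
    refine LinearIndependent.of_comp eL.toLinearMap ?_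
    have hcomp : (⇑eL.toLinearMap ∘ w) = fun i : Fin n => X i := by
      funext i
      simp only [Function.comp_apply, hXdef, LinearEquiv.coe_coe]
    rw [hcomp]
    exact hXrows
  have hfinal := hwLI.units_smul (fun i =>
    Units.mk0 ((N:ℝ) ^ ((i : ℕ) + 1)) (by positivity))
  convert hfinal using 1
  funext i
  simp only [Pi.smul_apply', hwdef]
  rw [Units.smul_mk0, smul_smul, mul_inv_cancel₀ (by positivity), one_smul]
end
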